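/- arXiv:0905.4143 — 4 statements merged into one kernel-verified Lean document; each statement's English description precedes it below -/
import Mathlib

section
/- Let n ≥ 1 and let Q be an n×n matrix with entries in ℍ. Then every coefficient of the characteristic polynomial of the 2n×2n complex matrix Φ(Q) is a real number; in particular the characteristic polynomial of Φ(Q) is a monic polynomial of degree 2n with real coefficients. -/
/-- The standard embedding of the quaternions into `2 × 2` complex matrices:
`a + b i + c j + d k` is sent to `[[a + b i, c + d i], [-c + d i, a - b i]]`. -/
noncomputable def quatToMatrix (q : Quaternion ℝ) : Matrix (Fin 2) (Fin 2) ℂ :=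
  !![(⟨q.re, q.imI⟩ : ℂ), (⟨q.imJ, q.imK⟩ : ℂ);
     (⟨-q.imJ, q.imK⟩ : ℂ), (⟨q.re, -q.imI⟩ : ℂ)]

/-- The block embedding of `n × n` quaternionic matrices into `2n × 2n` complex matrices,
whose `2 × 2` block at position `(s, t)` is `φ (Q s t)`. -/
noncomputable def quatMatrixToMatrix {n : ℕ} (Q : Matrix (Fin n) (Fin n) (Quaternion ℝ)) :
    Matrix (Fin n × Fin 2) (Fin n × Fin 2) ℂ :=
  fun p r => quatToMatrix (Q p.1 r.1) p.2 r.2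

/-!
Conjugating the entries of `Φ(Q)` amounts to conjugating `Φ(Q)` by the block-diagonal matrix
with blocks `φ(j)`, because `j z j⁻¹ = z̄` for `z ∈ ℂ ⊂ ℍ`. So `Φ(Q)` and its entrywise complex
conjugate are similar, hence have the same characteristic polynomial, whose coefficients are
therefore fixed by complex conjugation.
-/

open Matrix Polynomial

theorem Matrix.charpoly_map_eq_self_of_exists_units_conj {m R : Type*} [Fintype m]
    [DecidableEq m] [CommRing R] (f : R →+* R) (A : Matrix m m R)
    (h : ∃ P : (Matrix m m R)ˣ, A.map f = P * A * (P⁻¹ : _ˣ)) : A.charpoly.map f = A.charpoly := by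
  obtain ⟨P, h⟩ := h
  rw [← charpoly_map, h, coe_units_inv, charpoly_units_conj]

theorem Matrix.exists_charpoly_coeff_eq_ofReal_of_exists_units_conj {m : Type*} [Fintype m]
    [DecidableEq m] (A : Matrix m m ℂ)
    (h : ∃ P : (Matrix m m ℂ)ˣ, A.map (starRingEnd ℂ) = P * A * (P⁻¹ : _ˣ)) (k : ℕ) :
    ∃ r : ℝ, A.charpoly.coeff k = r := by
  rw [← Complex.conj_eq_iff_real, ← coeff_map, charpoly_map_eq_self_of_exists_units_conj _ A h]

theorem Matrix.comp_map_mul_mul {I K R : Type*} [Fintype I] [DecidableEq I] [Fintype K]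
    [DecidableEq K] [Semiring R] (M : Matrix I I (Matrix K K R)) (P P' : Matrix K K R) :
    comp I I K K R (M.map fun B => P * B * P') =
      comp I I K K R (scalar I P) * comp I I K K R M * comp I I K K R (scalar I P') := by
  simp only [← compRingEquiv_apply, ← map_mul, scalar_apply]
  ext
  simp

/-- `φ(j)` as a unit. -/
def quatJ : (Matrix (Fin 2) (Fin 2) ℂ)ˣ where
  val := !![0, 1; -1, 0]
  inv := !![0, -1; 1, 0]
  val_inv := by ext i j; fin_cases i <;> fin_cases j <;> simp
  inv_val := by ext i j; fin_cases i <;> fin_cases j <;> simp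

theorem quatToMatrix_map_starRingEnd (q : Quaternion ℝ) :
    (quatToMatrix q).map (starRingEnd ℂ) = quatJ * quatToMatrix q * (quatJ⁻¹ : _ˣ) := by
  ext i j
  fin_cases i <;> fin_cases j <;> simp [quatJ, quatToMatrix, Complex.ext_iff]

theorem quatMatrixToMatrix_eq_comp {n : ℕ} (Q : Matrix (Fin n) (Fin n) (Quaternion ℝ)) :
    quatMatrixToMatrix Q = comp _ _ _ _ ℂ (Q.map quatToMatrix) := rfl

theorem exists_units_quatMatrixToMatrix_map_starRingEnd {n : ℕ}
    (Q : Matrix (Fin n) (Fin n) (Quaternion ℝ)) :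
    ∃ P : (Matrix (Fin n × Fin 2) (Fin n × Fin 2) ℂ)ˣ,
      (quatMatrixToMatrix Q).map (starRingEnd ℂ) = P * quatMatrixToMatrix Q * (P⁻¹ : _ˣ) := by
  refine ⟨Units.map ((compRingEquiv (Fin n) (Fin 2) ℂ).toRingHom.comp (scalar (Fin n))) quatJ, ?_⟩
  rw [quatMatrixToMatrix_eq_comp, ← comp_map_map]
  simp only [Matrix.map_map, Function.comp_def, quatToMatrix_map_starRingEnd]
  exact comp_map_mul_mul (Q.map quatToMatrix) _ _

theorem charpoly_quatMatrixToMatrix_real_monic_degree_general {n : ℕ}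
    (Q : Matrix (Fin n) (Fin n) (Quaternion ℝ)) :
    (∀ k : ℕ, ∃ r : ℝ, (Matrix.charpoly (quatMatrixToMatrix Q)).coeff k = (r : ℂ)) ∧
    (Matrix.charpoly (quatMatrixToMatrix Q)).Monic ∧
    (Matrix.charpoly (quatMatrixToMatrix Q)).natDegree = 2 * n := by
  refine ⟨exists_charpoly_coeff_eq_ofReal_of_exists_units_conj _
    (exists_units_quatMatrixToMatrix_map_starRingEnd Q), charpoly_monic _, ?_⟩
  rw [charpoly_natDegree_eq_dim, Fintype.card_prod, Fintype.card_fin, Fintype.card_fin, mul_comm]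

/-- **Characteristic polynomials of quaternionic matrices are real** (Section 1.3 of the
paper). For `n ≥ 1` and an `n × n` quaternionic matrix `Q`, every coefficient of the
characteristic polynomial of the `2n × 2n` complex matrix `Φ(Q)` is a real number; in
particular this characteristic polynomial is monic of degree `2n`. -/
theorem charpoly_quatMatrixToMatrix_real_monic_degree {n : ℕ} (hn : 1 ≤ n)
    (Q : Matrix (Fin n) (Fin n) (Quaternion ℝ)) :
    (∀ k : ℕ, ∃ r : ℝ, (Matrix.charpoly (quatMatrixToMatrix Q)).coeff k = (r : ℂ)) ∧
    (Matrix.charpoly (quatMatrixToMatrix Q)).Monic ∧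
    (Matrix.charpoly (quatMatrixToMatrix Q)).natDegree = 2 * n :=
  charpoly_quatMatrixToMatrix_real_monic_degree_general Q
end

section
/- Let n ≥ 1 and let Q be an invertible n×n matrix with entries in ℍ. Then the determinant of the 2n×2n complex matrix Φ(Q) is a positive real number. -/
/-! `Φ` is multiplicative and compatible with block decompositions, so the Schur complement
formula `det (fromBlocks A B C D) = det D * det (A - B D⁻¹ C)` transports along `Φ`. For a
`1 × 1` corner `D = (d)` with `d ≠ 0` one has `det Φ(D) = |d|²`, and such a corner can be
produced by a row permutation `σ`, which does not change `det Φ` since `Φ` turns it into a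
permutation of sign `(sign σ)² = 1`; if no such corner exists, `Φ(A)` has a zero column. By
induction `det Φ(A)` is a nonnegative real for every quaternionic matrix `A`, and it is nonzero
when `A` is invertible because `Φ(A)` then is. -/

open Matrix Equiv
open scoped Quaternion ComplexOrder

lemma quatToMatrix_zero : quatToMatrix 0 = 0 := by
  ext a b; fin_cases a <;> fin_cases b <;> simp [quatToMatrix, Complex.ext_iff]

lemma quatToMatrix_one : quatToMatrix 1 = 1 := by
  ext a b; fin_cases a <;> fin_cases b <;> simp [quatToMatrix, Complex.ext_iff]

lemma quatToMatrix_add (p q : ℍ) :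
    quatToMatrix (p + q) = quatToMatrix p + quatToMatrix q := by
  ext a b
  fin_cases a <;> fin_cases b <;> apply Complex.ext <;> simp [quatToMatrix] <;> ring

lemma quatToMatrix_mul (p q : ℍ) :
    quatToMatrix (p * q) = quatToMatrix p * quatToMatrix q := by
  ext a b
  fin_cases a <;> fin_cases b <;> apply Complex.ext <;>
    simp [quatToMatrix, Matrix.mul_apply, Fin.sum_univ_two] <;> ring

noncomputable def quatToMatrixRingHom : ℍ →+* Matrix (Fin 2) (Fin 2) ℂ where
  toFun := quatToMatrix
  map_zero' := quatToMatrix_zero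
  map_one' := quatToMatrix_one
  map_add' := quatToMatrix_add
  map_mul' := quatToMatrix_mul

lemma det_quatToMatrix (q : ℍ) : (quatToMatrix q).det = ((Quaternion.normSq q : ℝ) : ℂ) := by
  apply Complex.ext <;>
    simp [quatToMatrix, Matrix.det_fin_two, Quaternion.normSq_def', - Complex.ofReal_pow] <;> ring

variable {l m n o : Type*}

noncomputable def quatBlockMatrix (A : Matrix m n ℍ) : Matrix (m × Fin 2) (n × Fin 2) ℂ :=
  fun p r => quatToMatrixRingHom (A p.1 r.1) p.2 r.2

lemma quatMatrixToMatrix_eq_quatBlockMatrix {k : ℕ} (Q : Matrix (Fin k) (Fin k) ℍ) :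
    quatMatrixToMatrix Q = quatBlockMatrix Q := rfl

lemma quatBlockMatrix_sub (A B : Matrix m n ℍ) :
    quatBlockMatrix (A - B) = quatBlockMatrix A - quatBlockMatrix B := by
  ext p r
  simp [quatBlockMatrix]

lemma quatBlockMatrix_mul [Fintype n] (A : Matrix l n ℍ) (B : Matrix n m ℍ) :
    quatBlockMatrix (A * B) = quatBlockMatrix A * quatBlockMatrix B := by
  ext p r
  simp [quatBlockMatrix, Matrix.mul_apply, Fintype.sum_prod_type, map_sum, Matrix.sum_apply]

lemma quatBlockMatrix_one [DecidableEq n] : quatBlockMatrix (1 : Matrix n n ℍ) = 1 := by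
  ext ⟨i, a⟩ ⟨j, b⟩
  by_cases h : i = j
  · subst h; simp [quatBlockMatrix, Matrix.one_apply]
  · simp [quatBlockMatrix, h]

lemma quatBlockMatrix_submatrix (A : Matrix m n ℍ) (e : l → m) (f : o → n) :
    quatBlockMatrix (A.submatrix e f) =
      (quatBlockMatrix A).submatrix (Prod.map e id) (Prod.map f id) := rfl

lemma quatBlockMatrix_fromBlocks (A : Matrix l m ℍ) (B : Matrix l n ℍ) (C : Matrix o m ℍ)
    (D : Matrix o n ℍ) :
    quatBlockMatrix (fromBlocks A B C D) =
      (fromBlocks (quatBlockMatrix A) (quatBlockMatrix B) (quatBlockMatrix C)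
        (quatBlockMatrix D)).submatrix (sumProdDistrib _ _ _) (sumProdDistrib _ _ _) := by
  ext ⟨i | i, a⟩ ⟨j | j, b⟩ <;> rfl

lemma det_quatBlockMatrix_fromBlocks₂₂ [Fintype m] [DecidableEq m] [Fintype n] [DecidableEq n]
    (A : Matrix m m ℍ) (B : Matrix m n ℍ) (C : Matrix n m ℍ) (D : Matrix n n ℍ)
    [Invertible D] :
    (quatBlockMatrix (fromBlocks A B C D)).det =
      (quatBlockMatrix D).det * (quatBlockMatrix (A - B * ⅟D * C)).det := by
  let _ : Invertible (quatBlockMatrix D) :=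
    ⟨quatBlockMatrix ⅟D, by rw [← quatBlockMatrix_mul, invOf_mul_self, quatBlockMatrix_one],
      by rw [← quatBlockMatrix_mul, mul_invOf_self, quatBlockMatrix_one]⟩
  rw [quatBlockMatrix_fromBlocks, det_submatrix_equiv_self, det_fromBlocks₂₂,
    quatBlockMatrix_sub, quatBlockMatrix_mul, quatBlockMatrix_mul]
  rfl

lemma det_quatBlockMatrix_of_unique [Unique n] [Fintype n] [DecidableEq n] (A : Matrix n n ℍ) :
    (quatBlockMatrix A).det = ((Quaternion.normSq (A default default) : ℝ) : ℂ) := by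
  have hA : quatBlockMatrix A = (quatToMatrix (A default default)).submatrix
      (uniqueProd (Fin 2) n) (uniqueProd (Fin 2) n) := by
    ext ⟨i, a⟩ ⟨j, b⟩
    rw [Unique.eq_default i, Unique.eq_default j]
    rfl
  rw [hA, det_submatrix_equiv_self, det_quatToMatrix]

lemma det_quatBlockMatrix_submatrix_perm [Fintype n] [DecidableEq n] (σ : Perm n)
    (A : Matrix n n ℍ) :
    (quatBlockMatrix (A.submatrix σ id)).det = (quatBlockMatrix A).det := by
  have hsign : Perm.sign (prodCongrLeft fun _ : Fin 2 => σ) = 1 := by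
    rw [Perm.sign_prodCongrLeft, Fin.prod_univ_two, Int.units_mul_self]
  have hA : quatBlockMatrix (A.submatrix σ id) =
      (quatBlockMatrix A).submatrix (prodCongrLeft fun _ : Fin 2 => σ) id := rfl
  rw [hA, det_permute, hsign, Units.val_one, Int.cast_one, one_mul]

lemma exists_det_quatBlockMatrix_eq_normSq_mul {k : ℕ}
    (A : Matrix (Fin (k + 1)) (Fin (k + 1)) ℍ) (h : A (Fin.last k) (Fin.last k) ≠ 0) :
    ∃ S : Matrix (Fin k) (Fin k) ℍ, (quatBlockMatrix A).det =
      ((Quaternion.normSq (A (Fin.last k) (Fin.last k)) : ℝ) : ℂ) *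
        (quatBlockMatrix S).det := by
  set B := A.submatrix finSumFinEquiv finSumFinEquiv
  have hdet : (quatBlockMatrix A).det = (quatBlockMatrix B).det := by
    rw [quatBlockMatrix_submatrix]
    exact (det_submatrix_equiv_self (finSumFinEquiv.prodCongr (Equiv.refl _)) _).symm
  have hD : IsUnit B.toBlocks₂₂ := (MulEquiv.isUnit_map uniqueRingEquiv.toMulEquiv).mp h.isUnit
  let _ := hD.invertible
  refine ⟨B.toBlocks₁₁ - B.toBlocks₁₂ * ⅟B.toBlocks₂₂ * B.toBlocks₂₁, ?_⟩
  conv_lhs => rw [hdet, ← fromBlocks_toBlocks B]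
  rw [det_quatBlockMatrix_fromBlocks₂₂, det_quatBlockMatrix_of_unique]
  rfl

lemma det_quatBlockMatrix_nonneg {k : ℕ} (A : Matrix (Fin k) (Fin k) ℍ) :
    0 ≤ (quatBlockMatrix A).det := by
  induction k with
  | zero => simp
  | succ k ih =>
    by_cases hcol : ∀ i, A i (Fin.last k) = 0
    · rw [det_eq_zero_of_column_eq_zero (Fin.last k, 0) fun p => by
        simp [quatBlockMatrix, hcol, map_zero]]
    · obtain ⟨i, hi⟩ := not_forall.mp hcol
      rw [← det_quatBlockMatrix_submatrix_perm (swap i (Fin.last k))]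
      obtain ⟨S, hS⟩ := exists_det_quatBlockMatrix_eq_normSq_mul
        (A.submatrix (swap i (Fin.last k)) id) (by simpa using hi)
      rw [hS]
      exact mul_nonneg (Complex.zero_le_real.mpr (Quaternion.normSq_nonneg)) (ih S)

theorem det_quatMatrixToMatrix_pos_real_general {n : ℕ}
    (Q : Matrix (Fin n) (Fin n) (Quaternion ℝ)) (hQ : IsUnit Q) :
    ∃ r : ℝ, 0 < r ∧ (quatMatrixToMatrix Q).det = (r : ℂ) := by
  obtain ⟨u, rfl⟩ := hQ
  rw [quatMatrixToMatrix_eq_quatBlockMatrix]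
  have hne : (quatBlockMatrix (u : Matrix (Fin n) (Fin n) ℍ)).det ≠ 0 :=
    det_ne_zero_of_right_inverse (B := quatBlockMatrix ↑u⁻¹) <| by
      rw [← quatBlockMatrix_mul, u.mul_inv, quatBlockMatrix_one]
  have hpos := (det_quatBlockMatrix_nonneg _).lt_of_ne' hne
  exact ⟨_, (Complex.pos_iff.mp hpos).1,
    Complex.eq_re_of_ofReal_le (r := 0) (by simpa using hpos.le)⟩

/-- **The reduced norm of `GL(n, ℍ)` takes values in `ℝ₊ˣ`** (Section 1.1 of the paper).
For `n ≥ 1` and an invertible `n × n` quaternionic matrix `Q`, the determinant of the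
`2n × 2n` complex matrix `Φ(Q)` is a positive real number. -/
theorem det_quatMatrixToMatrix_pos_real {n : ℕ} (hn : 1 ≤ n)
    (Q : Matrix (Fin n) (Fin n) (Quaternion ℝ)) (hQ : IsUnit Q) :
    ∃ r : ℝ, 0 < r ∧ (quatMatrixToMatrix Q).det = (r : ℂ) :=
  det_quatMatrixToMatrix_pos_real_general Q hQ
end

section
/- For every continuous group homomorphism ψ : ℍˣ → ℂˣ there exists a unique s ∈ ℂ such that ψ(q) = (normSq q)^s for all q ∈ ℍˣ. -/
/-!
On the positive scalars `exp t`, a continuous character `ψ` of `ℍˣ` restricts to a continuous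
character of `(ℝ, +)`. Such a character is a difference quotient of its own primitive, hence
differentiable, hence a solution of `χ' = χ'(0) χ`, i.e. `χ t = exp (w t)`.
Every `q` is conjugate to `star q` (by a pure quaternion orthogonal to `im q`), so
`ψ q ^ 2 = ψ (q * star q) = ψ (normSq q) = (normSq q) ^ w`. Thus `ψ` and `normSq ^ (w / 2)` are
continuous functions on the connected group `ℍˣ` with the same square and equal at `1`,
hence equal; and `w = 2 s` is forced by evaluating at the scalars.
-/

open Complex Quaternion

namespace Complex

theorem hasDerivAt_exp_mul_ofReal (w : ℂ) (t : ℝ) :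
    HasDerivAt (fun x : ℝ => exp (w * x)) (w * exp (w * t)) t := by
  simpa [mul_comm] using ((hasDerivAt_id t).ofReal_comp.const_mul w).cexp

theorem eq_of_forall_exp_mul_ofReal_eq {a b : ℂ} (h : ∀ t : ℝ, exp (a * t) = exp (b * t)) :
    a = b := by
  have := (hasDerivAt_exp_mul_ofReal a 0).unique (funext h ▸ hasDerivAt_exp_mul_ofReal b 0)
  simpa using this

theorem ofReal_cpow_eq_exp_mul_log {x : ℝ} (hx : 0 < x) (s : ℂ) :
    (x : ℂ) ^ s = exp (s * Real.log x) := by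
  rw [cpow_def_of_ne_zero (ofReal_ne_zero.mpr hx.ne'), ofReal_log hx.le, mul_comm]

end Complex

namespace AddChar

variable {χ : AddChar ℝ ℂ}

theorem integral_add_sub_integral (hχ : Continuous χ) (t h : ℝ) :
    (∫ u in (0)..(t + h), χ u) - (∫ u in (0)..t, χ u) = χ t * ∫ u in (0)..h, χ u := by
  rw [intervalIntegral.integral_interval_sub_left (f := χ) (hχ.intervalIntegrable _ _)
    (hχ.intervalIntegrable _ _), ← intervalIntegral.integral_const_mul]
  simp only [← map_add_eq_mul]
  simp [intervalIntegral.integral_comp_add_left (fun u => χ u) t (a := 0) (b := h)]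

theorem differentiable (hχ : Continuous χ) : Differentiable ℝ χ := by
  set Φ : ℝ → ℂ := fun t => ∫ u in (0)..t, χ u
  have hΦ (t : ℝ) : HasDerivAt Φ (χ t) t :=
    intervalIntegral.integral_hasDerivAt_right (hχ.intervalIntegrable _ _)
      (hχ.stronglyMeasurableAtFilter _ _) hχ.continuousAt
  obtain ⟨h, hh⟩ : ∃ h, Φ h ≠ 0 := by
    by_contra! hΦ0
    exact one_ne_zero <| by simpa using (hΦ 0).unique (funext hΦ0 ▸ hasDerivAt_const 0 0)
  have hχ_eq : (χ : ℝ → ℂ) = fun t => (Φ (t + h) - Φ t) / Φ h := by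
    funext t
    rw [integral_add_sub_integral hχ t h, mul_div_cancel_right₀ _ hh]
  rw [hχ_eq]
  exact fun t => ((((hΦ _).comp_add_const t h).sub (hΦ t)).div_const _).differentiableAt

theorem hasDerivAt (hχ : Continuous χ) (t : ℝ) : HasDerivAt χ (deriv χ 0 * χ t) t := by
  have hχ_eq : (χ : ℝ → ℂ) = fun x => χ t * χ (x - t) := by
    funext x
    rw [← map_add_eq_mul, add_sub_cancel]
  have h0 := (differentiable hχ (t - t)).hasDerivAt.comp_sub_const t t
  rw [sub_self] at h0
  have := h0.const_mul (χ t)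
  rwa [← hχ_eq, mul_comm] at this

theorem eq_exp_mul (hχ : Continuous χ) (t : ℝ) : χ t = exp (deriv χ 0 * t) := by
  set w := deriv χ 0
  have hconst (x : ℝ) : HasDerivAt (fun x : ℝ => χ x * exp (-w * x)) 0 x :=
    ((hasDerivAt hχ x).mul (hasDerivAt_exp_mul_ofReal (-w) x)).congr_deriv (by ring)
  have h := is_const_of_deriv_eq_zero (fun x => (hconst x).differentiableAt)
    (fun x => (hconst x).deriv) t 0
  rw [neg_mul, exp_neg] at h
  simpa [← div_eq_mul_inv, div_eq_iff (exp_ne_zero _)] using h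

end AddChar

theorem Units.pathConnectedSpace_of_one_lt_rank {D : Type*} [NormedDivisionRing D]
    [NormedAlgebra ℝ D] (h : 1 < Module.rank ℝ D) : PathConnectedSpace Dˣ :=
  have : PathConnectedSpace {x : D // x ≠ 0} := isPathConnected_iff_pathConnectedSpace.mp
    (isPathConnected_compl_singleton_of_one_lt_rank h 0)
  let e := unitsHomeomorphNeZero (G₀ := D)
  e.symm.surjective.pathConnectedSpace e.symm.continuous

namespace Quaternion

theorem mul_eq_star_mul_of_orthogonal {R : Type*} [CommRing R] {c q : ℍ[R]} (hc : c.re = 0)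
    (horth : c.imI * q.imI + c.imJ * q.imJ + c.imK * q.imK = 0) : c * q = star q * c := by
  ext <;> simp only [re_mul, imI_mul, imJ_mul, imK_mul, re_star, imI_star, imJ_star, imK_star, hc]
  · linear_combination (-2 : R) * horth
  all_goals ring

theorem exists_ne_zero_mul_eq_star_mul {R : Type*} [CommRing R] [Nontrivial R] (q : ℍ[R]) :
    ∃ c : ℍ[R], c ≠ 0 ∧ c * q = star q * c := by
  -- `c` is specified by its coordinates: the `ℍ[R]` simp lemmas do not fire on a structure
  -- literal, whose type is `QuaternionAlgebra R (-1) 0 (-1)`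
  by_cases h : q.imI = 0 ∧ q.imJ = 0
  · obtain ⟨c, hre, hI, hJ, hK⟩ : ∃ c : ℍ[R], c.re = 0 ∧ c.imI = 1 ∧ c.imJ = 0 ∧ c.imK = 0 :=
      ⟨⟨0, 1, 0, 0⟩, rfl, rfl, rfl, rfl⟩
    refine ⟨c, fun h0 => by simp [h0] at hI, mul_eq_star_mul_of_orthogonal hre ?_⟩
    rw [hJ, hK, h.1]
    ring
  · obtain ⟨c, hre, hI, hJ, hK⟩ :
        ∃ c : ℍ[R], c.re = 0 ∧ c.imI = q.imJ ∧ c.imJ = -q.imI ∧ c.imK = 0 :=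
      ⟨⟨0, q.imJ, -q.imI, 0⟩, rfl, rfl, rfl, rfl⟩
    refine ⟨c, fun h0 => h ?_, mul_eq_star_mul_of_orthogonal hre ?_⟩
    · rw [h0, imI_zero] at hI
      rw [h0, imJ_zero, zero_eq_neg] at hJ
      exact ⟨hJ, hI.symm⟩
    · rw [hI, hJ, hK]
      ring

section LinearOrderedField

variable {R : Type*} [Field R] [LinearOrder R] [IsStrictOrderedRing R]

theorem isConj_star (q : ℍ[R]ˣ) : IsConj q (star q) := by
  obtain ⟨c, hc, hcq⟩ := exists_ne_zero_mul_eq_star_mul (q : ℍ[R])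
  refine isConj_iff.mpr ⟨Units.mk0 c hc, Units.ext ?_⟩
  simp [hcq, mul_inv_cancel_right₀ hc]

theorem normSq_units_pos (q : ℍ[R]ˣ) : 0 < normSq (q : ℍ[R]) :=
  normSq_nonneg.lt_of_ne' (normSq_ne_zero.mpr q.ne_zero)

end LinearOrderedField

instance : PathConnectedSpace ℍˣ :=
  Units.pathConnectedSpace_of_one_lt_rank (by rw [rank_eq_four]; norm_num)

theorem continuous_normSq_cpow (s : ℂ) :
    Continuous fun q : ℍˣ => ((normSq (q : ℍ) : ℝ) : ℂ) ^ s :=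
  (continuous_ofReal.comp (continuous_normSq.comp Units.continuous_val)).cpow continuous_const
    fun q => ofReal_mem_slitPlane.mpr (normSq_units_pos q)

noncomputable def expUnit (t : ℝ) : ℍˣ where
  val := (Real.exp t : ℍ)
  inv := (Real.exp (-t) : ℍ)
  val_inv := by rw [← coe_mul, ← Real.exp_add, add_neg_cancel, Real.exp_zero, coe_one]
  inv_val := by rw [← coe_mul, ← Real.exp_add, neg_add_cancel, Real.exp_zero, coe_one]

@[simp]
theorem coe_expUnit (t : ℝ) : (expUnit t : ℍ) = (Real.exp t : ℍ) := rfl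

theorem expUnit_add (a b : ℝ) : expUnit (a + b) = expUnit a * expUnit b :=
  Units.ext (by simp [Real.exp_add])

noncomputable def radialChar (ψ : ℍˣ →* ℂˣ) : AddChar ℝ ℂ where
  toFun t := ψ (expUnit t)
  map_zero_eq_one' := by simp [show expUnit 0 = 1 from Units.ext (by simp)]
  map_add_eq_mul' a b := by simp [expUnit_add]

variable {ψ : ℍˣ →* ℂˣ}

@[simp]
theorem radialChar_apply (t : ℝ) : radialChar ψ t = ψ (expUnit t) := rfl

theorem continuous_radialChar (hψ : Continuous ψ) : Continuous (radialChar ψ) := by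
  refine Units.continuous_val.comp (hψ.comp ?_)
  rw [Units.isEmbedding_val₀.continuous_iff]
  exact continuous_coe.comp Real.continuous_exp

theorem sq_apply_eq_radialChar_log_normSq (q : ℍˣ) :
    (ψ q : ℂ) ^ 2 = radialChar ψ (Real.log (normSq (q : ℍ))) := by
  have hstar : ψ (star q) = ψ q := (isConj_iff_eq.mp (ψ.map_isConj (isConj_star q))).symm
  have hmul : q * star q = expUnit (Real.log (normSq (q : ℍ))) :=
    Units.ext (by simp [self_mul_star, Real.exp_log (normSq_units_pos q)])
  rw [radialChar_apply, ← hmul, map_mul, hstar, Units.val_mul, sq]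

theorem radialChar_apply_of_forall_eq_cpow {s : ℂ}
    (h : ∀ q : ℍˣ, (ψ q : ℂ) = ((normSq (q : ℍ) : ℝ) : ℂ) ^ s) (t : ℝ) :
    radialChar ψ t = exp (2 * s * t) := by
  rw [radialChar_apply, h, coe_expUnit, normSq_coe, ← Real.exp_nat_mul,
    ofReal_cpow_eq_exp_mul_log (Real.exp_pos _), Real.log_exp]
  push_cast
  ring_nf

end Quaternion

/-- **Characters of `ℍˣ = GL(1, ℍ)` factor through the reduced norm** (Sections 1.2 and 9.3
of the paper). For every continuous group homomorphism `ψ : ℍˣ → ℂˣ` there exists a unique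
`s ∈ ℂ` such that `ψ q = (normSq q) ^ s` for all nonzero quaternions `q`, where
`r ^ s = exp (s * log r)` for a positive real `r`. -/
theorem characters_of_quaternion_units (ψ : (Quaternion ℝ)ˣ →* ℂˣ) (hψ : Continuous ψ) :
    ∃! s : ℂ, ∀ q : (Quaternion ℝ)ˣ,
      (ψ q : ℂ) = ((Quaternion.normSq (q : Quaternion ℝ) : ℝ) : ℂ) ^ s := by
  obtain ⟨w, hw⟩ : ∃ w : ℂ, ∀ t : ℝ, radialChar ψ t = exp (w * t) :=
    ⟨_, (radialChar ψ).eq_exp_mul (continuous_radialChar hψ)⟩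
  refine ⟨w / 2, fun q => ?_, fun s hs => ?_⟩
  · have hsq (q : ℍˣ) : (ψ q : ℂ) ^ 2 = (((normSq (q : ℍ) : ℝ) : ℂ) ^ (w / 2)) ^ 2 := by
      rw [sq_apply_eq_radialChar_log_normSq, hw,
        ofReal_cpow_eq_exp_mul_log (normSq_units_pos q), ← exp_nat_mul]
      ring_nf
    have hne (q : ℍˣ) : ((normSq (q : ℍ) : ℝ) : ℂ) ^ (w / 2) ≠ 0 := by
      rw [ofReal_cpow_eq_exp_mul_log (normSq_units_pos q)]
      exact exp_ne_zero _
    exact isPreconnected_univ.eq_of_sq_eq (Units.continuous_val.comp hψ).continuousOn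
      (continuous_normSq_cpow _).continuousOn (fun q _ => hsq q) (fun _ => hne _)
      (Set.mem_univ 1) (by simp) (Set.mem_univ q)
  · linear_combination (eq_of_forall_exp_mul_ofReal_eq fun t =>
      (radialChar_apply_of_forall_eq_cpow hs t).symm.trans (hw t)) / 2
end

section
/- Let R be a commutative ring, let n ≥ 2, and let M be an n×n matrix over R. Then det(M) · det(M°) = det(M₍₁,₁₎) · det(M₍ₙ,ₙ₎) − det(M₍₁,ₙ₎) · det(M₍ₙ,₁₎), where M° is the (n−2)×(n−2) matrix obtained from M by deleting its first and last rows and its first and last columns, and M₍ᵢ,ⱼ₎ is the (n−1)×(n−1) matrix obtained from M by deleting row i and column j (with indices 1 and n referring to the first and last row/column). -/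
/-!
Jacobi's complementary minor theorem for a block of size two does all the work. Split the
indices of `A` into blocks `m ⊕ n` and let `B` be the identity matrix with its `m`-columns
replaced by those of `adj A`. Since `A * adj A = det A • 1`, the `m`-columns of `A * B` are
`det A` times unit vectors and its `n`-columns are those of `A`, so comparing determinants gives
`det A * det (adj A)ₘₘ = det A ^ |m| * det Aₙₙ`. For the generic matrix over `ℤ[Xᵢⱼ]` one factor
`det A` cancels, and the identity specialises to every commutative ring. When `m` consists of the
two corner indices, `det (adj A)ₘₘ` is the right-hand side of the Lewis Carroll identity, because
the two off-diagonal corner cofactors carry the same sign `(-1) ^ (n + 1)`.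
-/

noncomputable def Fin.cornersSumInteriorEquiv (n : ℕ) : Fin 2 ⊕ Fin n ≃ Fin (n + 2) :=
  Equiv.ofBijective (Sum.elim ![0, Fin.last (n + 1)] fun k ↦ k.castSucc.succ) <| by
    rw [Fintype.bijective_iff_injective_and_card]
    refine ⟨?_, by simp [add_comm]⟩
    refine Function.Injective.sumElim ?_
      ((Fin.succ_injective _).comp (Fin.castSucc_injective _)) fun a b ↦ ?_
    · intro a b
      fin_cases a <;> fin_cases b <;> simp [Fin.ext_iff]
    · fin_cases a <;> simp [Fin.ext_iff]
      omega

namespace Matrix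

variable {R : Type*} [CommRing R]

section Jacobi

variable {m n : Type*} [Fintype m] [Fintype n] [DecidableEq m] [DecidableEq n]

theorem det_mul_det_toBlocks₁₁_adjugate (A : Matrix (m ⊕ n) (m ⊕ n) R) :
    A.det * A.adjugate.toBlocks₁₁.det = A.det ^ Fintype.card m * A.toBlocks₂₂.det := by
  let B := fromBlocks A.adjugate.toBlocks₁₁ 0 A.adjugate.toBlocks₂₁ (1 : Matrix n n R)
  have hAB : A * B = fromBlocks (A.det • 1) A.toBlocks₁₂ 0 A.toBlocks₂₂ := by
    ext i (j | j)
    · have h := congrFun₂ (mul_adjugate A) i (.inl j)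
      rcases i with i | i <;>
        simpa [B, mul_apply, Fintype.sum_sum_type, toBlocks₁₁, toBlocks₂₁, one_apply] using h
    · rcases i with i | i <;>
        simp [B, mul_apply, Fintype.sum_sum_type, one_apply, toBlocks₁₂, toBlocks₂₂]
  calc A.det * A.adjugate.toBlocks₁₁.det = (A * B).det := by
        rw [det_mul, det_fromBlocks_zero₁₂, det_one, mul_one]
    _ = A.det ^ Fintype.card m * A.toBlocks₂₂.det := by
        rw [hAB, det_fromBlocks_zero₂₁, det_smul, det_one, mul_one]

theorem det_toBlocks₁₁_adjugate [Nonempty m] (A : Matrix (m ⊕ n) (m ⊕ n) R) :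
    A.adjugate.toBlocks₁₁.det = A.det ^ (Fintype.card m - 1) * A.toBlocks₂₂.det := by
  let X := mvPolynomialX (m ⊕ n) (m ⊕ n) ℤ
  suffices hX : X.adjugate.toBlocks₁₁.det = X.det ^ (Fintype.card m - 1) * X.toBlocks₂₂.det by
    let φ := MvPolynomial.aeval (R := ℤ) fun p : (m ⊕ n) × (m ⊕ n) ↦ A p.1 p.2
    rw [← mvPolynomialX_mapMatrix_aeval ℤ A, ← AlgHom.map_adjugate]
    change (φ.mapMatrix X.adjugate.toBlocks₁₁).det =
      (φ.mapMatrix X).det ^ _ * (φ.mapMatrix X.toBlocks₂₂).det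
    rw [← AlgHom.map_det, ← AlgHom.map_det, ← AlgHom.map_det, ← map_pow, ← map_mul, hX]
  apply mul_left_cancel₀ (det_mvPolynomialX_ne_zero (m ⊕ n) ℤ)
  rw [det_mul_det_toBlocks₁₁_adjugate, ← mul_assoc, ← pow_succ',
    Nat.sub_add_cancel Fintype.card_pos]

end Jacobi

section Corners

variable {n : ℕ} (A : Matrix (Fin (n + 1)) (Fin (n + 1)) R)

theorem adjugate_zero_zero : A.adjugate 0 0 = (A.submatrix Fin.succ Fin.succ).det := by
  simp [adjugate_fin_succ_eq_det_submatrix]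

theorem adjugate_last_last :
    A.adjugate (Fin.last n) (Fin.last n) = (A.submatrix Fin.castSucc Fin.castSucc).det := by
  simp [adjugate_fin_succ_eq_det_submatrix, ← two_mul, pow_mul]

theorem adjugate_zero_last :
    A.adjugate 0 (Fin.last n) = (-1) ^ n * (A.submatrix Fin.castSucc Fin.succ).det := by
  simp [adjugate_fin_succ_eq_det_submatrix]

theorem adjugate_last_zero :
    A.adjugate (Fin.last n) 0 = (-1) ^ n * (A.submatrix Fin.succ Fin.castSucc).det := by
  simp [adjugate_fin_succ_eq_det_submatrix]

end Corners

theorem det_adjugate_corners {n : ℕ} (M : Matrix (Fin (n + 2)) (Fin (n + 2)) R) :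
    M.adjugate 0 0 * M.adjugate (Fin.last _) (Fin.last _) -
        M.adjugate 0 (Fin.last _) * M.adjugate (Fin.last _) 0 =
      M.det * (M.submatrix (fun i : Fin n ↦ i.castSucc.succ) fun j ↦ j.castSucc.succ).det := by
  let e := Fin.cornersSumInteriorEquiv n
  have h := det_toBlocks₁₁_adjugate (M.submatrix e e)
  rw [adjugate_submatrix_equiv_self, det_submatrix_equiv_self, det_fin_two] at h
  simp only [Fintype.card_fin, Nat.reduceSub, pow_one] at h
  exact h

end Matrix

open Matrix in
/-- **The Lewis Carroll identity (Dodgson condensation)** (used in Section 14 of the paper).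
Let `R` be a commutative ring and let `M` be an `n × n` matrix over `R` with `n ≥ 2`
(written `n + 2` below). Then
`det M * det M° = det M₍₁,₁₎ * det M₍ₙ,ₙ₎ − det M₍₁,ₙ₎ * det M₍ₙ,₁₎`,
where `M°` deletes the first and last rows and columns of `M`, and `M₍ᵢ,ⱼ₎` deletes row `i`
and column `j` (indices `1` and `n` meaning the first and last row/column). -/
theorem lewis_carroll_identity {R : Type*} [CommRing R] {n : ℕ}
    (M : Matrix (Fin (n + 2)) (Fin (n + 2)) R) :
    M.det *
        (M.submatrix (fun i : Fin n => i.castSucc.succ) (fun j : Fin n => j.castSucc.succ)).det =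
      (M.submatrix Fin.succ Fin.succ).det * (M.submatrix Fin.castSucc Fin.castSucc).det -
        (M.submatrix Fin.succ Fin.castSucc).det * (M.submatrix Fin.castSucc Fin.succ).det := by
  have h := det_adjugate_corners M
  rw [adjugate_zero_zero, adjugate_last_last, adjugate_zero_last, adjugate_last_zero] at h
  have hsign : ((-1 : R) ^ (n + 1)) ^ 2 = 1 := by rw [← pow_mul, pow_mul', neg_one_sq, one_pow]
  linear_combination -h -
    (M.submatrix Fin.castSucc Fin.succ).det * (M.submatrix Fin.succ Fin.castSucc).det * hsign
end
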